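/- arXiv:2205.04309 — 2 statements merged into one kernel-verified Lean document; each statement's English description precedes it below -/
import Mathlib

section
/- Let val be a C-valuation with a neutral color ε, and let G be a C-graph with sufficiently many ε-edges. Then there exists a completely well-monotonic C-graph G' and a val-preserving morphism from G to G'. -/
/-!
Common vocabulary: graphs as edge relations `E : V → C → V → Prop` (a `C`-graph
additionally has no sinks), infinite paths and their colorations, valuations,
values of vertices, morphisms, universality, monotonic graphs, games,
strategies, positional strategies and positionality, neutral colors.
-/

universe u v w

section Prelim

variable {C : Type} {X : Type}

/-- A `C`-graph (as an edge relation) has no sinks. -/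
def NoSinks {V : Type v} (E : V → C → V → Prop) : Prop :=
  ∀ a : V, ∃ (c : C) (b : V), E a c b

/-- `InfPath E a w` : there is an infinite path from `a` with coloration `w`. -/
def InfPath {V : Type v} (E : V → C → V → Prop) (a : V) (w : ℕ → C) : Prop :=
  ∃ ρ : ℕ → V, ρ 0 = a ∧ ∀ i, E (ρ i) (w i) (ρ (i + 1))

/-- The value of a vertex in a graph: supremum of values of colorations of
infinite paths from it. -/
noncomputable def vval {V : Type v} [CompleteLinearOrder X]
    (val : (ℕ → C) → X) (E : V → C → V → Prop) (a : V) : X :=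
  sSup (val '' {w | InfPath E a w})

/-- Morphisms of `C`-graphs. -/
def IsMorphism {V : Type v} {V' : Type w} (E : V → C → V → Prop)
    (E' : V' → C → V' → Prop) (φ : V → V') : Prop :=
  ∀ ⦃a : V⦄ ⦃c : C⦄ ⦃b : V⦄, E a c b → E' (φ a) c (φ b)

/-- `val`-preserving morphisms of `C`-graphs. -/
def ValPreserving {V : Type v} {V' : Type w} [CompleteLinearOrder X]
    (val : (ℕ → C) → X) (E : V → C → V → Prop) (E' : V' → C → V' → Prop)
    (φ : V → V') : Prop :=
  IsMorphism E E' φ ∧ ∀ a : V, vval val E' (φ a) = vval val E a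

/-- Left composition: `a ≥ b → (b →c d) → (a →c d)`. -/
def LeftComp {L : Type v} [LinearOrder L] (M : L → C → L → Prop) : Prop :=
  ∀ ⦃a b : L⦄ ⦃c : C⦄ ⦃d : L⦄, b ≤ a → M b c d → M a c d

/-- Right composition: `(a →c b) → b ≥ d → (a →c d)`. -/
def RightComp {L : Type v} [LinearOrder L] (M : L → C → L → Prop) : Prop :=
  ∀ ⦃a : L⦄ ⦃c : C⦄ ⦃b d : L⦄, M a c b → d ≤ b → M a c d

/-- A monotonic graph over a linearly ordered vertex set. -/
def Monotonic {L : Type v} [LinearOrder L] (M : L → C → L → Prop) : Prop :=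
  LeftComp M ∧ RightComp M

/-- Every vertex has a `c`-predecessor, for every color `c`. -/
def CompletePreds {L : Type v} (M : L → C → L → Prop) : Prop :=
  ∀ (c : C) (l : L), ∃ p : L, M p c l

/-- `CWM C L M` : `M` is a completely well-monotonic `C`-graph over `L`:
monotonic, without sinks, well-ordered, a complete lattice, and with all
`c`-predecessors. -/
def CWM (C : Type) (L : Type v) [LinearOrder L] (M : L → C → L → Prop) : Prop :=
  Monotonic M ∧ NoSinks M ∧ WellFounded ((· < ·) : L → L → Prop) ∧
    (∀ A : Set L, ∃ a : L, IsLUB A a) ∧ CompletePreds M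

/-- `(κ, val)`-universality: every `C`-graph with fewer than `κ` vertices has a
`val`-preserving morphism into `M`. -/
def Universal {L : Type v} [CompleteLinearOrder X] (val : (ℕ → C) → X)
    (κ : Cardinal.{u}) (M : L → C → L → Prop) : Prop :=
  ∀ (V : Type u) (E : V → C → V → Prop), NoSinks E → Cardinal.mk V < κ →
    ∃ φ : V → L, ValPreserving val E M φ

/-! Histories: finite paths from `v₀`, stored as lists of steps `(c, x)`,
most recent step first. -/

/-- Last vertex of a history. -/
def lastV {V : Type v} (v₀ : V) : List (C × V) → V
  | [] => v₀
  | (_, x) :: _ => x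

/-- Validity of a history with respect to the graph `E` and start vertex `v₀`. -/
def ValidPath {V : Type v} (E : V → C → V → Prop) (v₀ : V) : List (C × V) → Prop
  | [] => True
  | (c, x) :: rest => ValidPath E v₀ rest ∧ E (lastV v₀ rest) c x

/-- A strategy (for Eve) from `v₀` in the game `(E, VEve, val)` : a subgraph
`(H, F)` of the unfolding of `E` from `v₀`, containing the empty history,
without sinks, and closed under all extensions at Adam vertices. -/
structure Strategy {V : Type v} (E : V → C → V → Prop) (VEve : Set V) (v₀ : V) where
  H : Set (List (C × V))
  F : List (C × V) → C → List (C × V) → Prop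
  valid : ∀ π ∈ H, ValidPath E v₀ π
  nil_mem : [] ∈ H
  F_sub : ∀ ⦃π : List (C × V)⦄ ⦃c : C⦄ ⦃π' : List (C × V)⦄,
    F π c π' → π ∈ H ∧ π' ∈ H ∧ ∃ x : V, π' = (c, x) :: π
  no_sink : ∀ π ∈ H, ∃ (c : C) (π' : List (C × V)), F π c π'
  adam_closed : ∀ π ∈ H, lastV v₀ π ∉ VEve →
    ∀ (c : C) (x : V), E (lastV v₀ π) c x → ((c, x) :: π) ∈ H ∧ F π c ((c, x) :: π)

/-- The value of a strategy: supremum of values of colorations of infinite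
paths from the empty history in the strategy. -/
noncomputable def Strategy.value {V : Type v} [CompleteLinearOrder X]
    (val : (ℕ → C) → X) {E : V → C → V → Prop} {VEve : Set V} {v₀ : V}
    (S : Strategy E VEve v₀) : X :=
  sSup (val '' {w | ∃ ρ : ℕ → List (C × V), ρ 0 = [] ∧ ∀ i, S.F (ρ i) (w i) (ρ (i + 1))})

/-- The value of a vertex in a game: infimum of values of strategies from it. -/
noncomputable def gameValue {V : Type v} [CompleteLinearOrder X] (val : (ℕ → C) → X)
    (E : V → C → V → Prop) (VEve : Set V) (v₀ : V) : X :=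
  ⨅ S : Strategy E VEve v₀, S.value val

/-- A positional strategy: a subgraph of `E` over all vertices keeping all
outgoing edges of Adam vertices. -/
structure PosStrategy {V : Type v} (E : V → C → V → Prop) (VEve : Set V) where
  F : V → C → V → Prop
  sub : ∀ ⦃a : V⦄ ⦃c : C⦄ ⦃b : V⦄, F a c b → E a c b
  no_sink : NoSinks F
  adam_all : ∀ a : V, a ∉ VEve → ∀ (c : C) (b : V), E a c b → F a c b

/-- The value of a positional strategy from a vertex. -/
noncomputable def PosStrategy.value {V : Type v} [CompleteLinearOrder X]
    (val : (ℕ → C) → X) {E : V → C → V → Prop} {VEve : Set V}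
    (P : PosStrategy E VEve) (v₀ : V) : X :=
  vval val P.F v₀

/-- Optimality of a positional strategy. -/
def PosStrategy.Optimal {V : Type v} [CompleteLinearOrder X]
    (val : (ℕ → C) → X) {E : V → C → V → Prop} {VEve : Set V}
    (P : PosStrategy E VEve) : Prop :=
  ∀ v₀ : V, P.value val v₀ = gameValue val E VEve v₀

/-- A valuation is positional if every game with this valuation admits an
optimal positional strategy. -/
def Positional [CompleteLinearOrder X] (val : (ℕ → C) → X) : Prop :=
  ∀ (V : Type u) (E : V → C → V → Prop), NoSinks E → ∀ VEve : Set V,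
    ∃ P : PosStrategy E VEve, P.Optimal val

/-! Words and neutral colors. -/

/-- Concatenation of a finite word with an infinite word. -/
def wcat (u : List C) (w : ℕ → C) : ℕ → C := fun i =>
  if h : i < u.length then u.get ⟨i, h⟩ else w (i - u.length)

/-- `w'` is obtained from `w` by inserting finitely many `e`'s between
consecutive letters (and before the first letter):
`w' = e^{n₀} w₀ e^{n₁} w₁ ⋯`. -/
def IsEpsInsertion (e : C) (w w' : ℕ → C) : Prop :=
  ∃ σ : ℕ → ℕ, StrictMono σ ∧ (∀ k, w' (σ k) = w k) ∧ ∀ i, i ∉ Set.range σ → w' i = e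

/-- `e` is a neutral color for `val`. -/
def Neutral [CompleteLinearOrder X] (val : (ℕ → C) → X) (e : C) : Prop :=
  ∀ w w' : ℕ → C, IsEpsInsertion e w w' → val w' = val w

/-- `e` is eventually good for Eve. -/
def EvGoodForEve [CompleteLinearOrder X] (val : (ℕ → C) → X) (e : C) : Prop :=
  ∀ u : List C, val (wcat u fun _ => e) = ⨅ z : ℕ → C, val (wcat u z)

/-- `e` is strongly neutral for `val`. -/
def StronglyNeutral [CompleteLinearOrder X] (val : (ℕ → C) → X) (e : C) : Prop :=
  Neutral val e ∧ EvGoodForEve val e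

/-- Prefix-increasing valuations. -/
def PrefixIncreasing [CompleteLinearOrder X] (val : (ℕ → C) → X) : Prop :=
  ∀ (u : List C) (w : ℕ → C), val w ≤ val (wcat u w)

/-! Objectives. -/

/-- The valuation (into the two-element complete linear order `Prop`,
`⊥ = False`, `⊤ = True`) associated with an objective `W`: winning words have
value `⊥`. -/
def toVal (W : Set (ℕ → C)) : (ℕ → C) → Prop := fun w => w ∉ W

/-- A vertex satisfies the objective `W` if every coloration of an infinite
path from it belongs to `W`. -/
def Sat {V : Type v} (W : Set (ℕ → C)) (E : V → C → V → Prop) (a : V) : Prop :=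
  ∀ w : ℕ → C, InfPath E a w → w ∈ W

/-- Prefix-invariant objectives. -/
def PrefixInvariant (W : Set (ℕ → C)) : Prop :=
  ∀ (u : List C) (w : ℕ → C), wcat u w ∈ W ↔ w ∈ W

/-- The completion `L^⊤` of a monotonic graph: a new top vertex with all
outgoing edges is added. -/
def completionE {L : Type v} (M : L → C → L → Prop) :
    WithTop L → C → WithTop L → Prop := fun x c y =>
  x = ⊤ ∨ ∃ a b : L, x = (a : WithTop L) ∧ y = (b : WithTop L) ∧ M a c b

/-- A graph has sufficiently many `e`-edges if `→e` is "well-founded" in the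
sense that every nonempty set of vertices contains a vertex `a` with `b →e a`
for all `b` in the set. -/
def SuffEps {V : Type v} (E : V → C → V → Prop) (e : C) : Prop :=
  ∀ A : Set V, A.Nonempty → ∃ a ∈ A, ∀ b ∈ A, E b e a

end Prelim

/-!
Sufficiently many `e`-edges make `¬ (b →e a)` a well-founded relation; extend it to a well-order
`≤` on `V`, so that `v →e w` whenever `w ≤ v`. The graph `G'` is `WithTop V` with `a →c b` iff some
`v ≤ a` has a `c`-edge to some `w ≥ b` in `G`, plus a top vertex with all edges. A path of `G'`
through `a₀, a₁, …` is shadowed in `G` by `a₀ →e v₀ →w₀ w₀' →e v₁ →w₁ w₁' →e ⋯` with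
`vᵢ ≤ aᵢ ≤ w'ᵢ₋₁`, whose coloration is `e w₀ e w₁ ⋯`; neutrality of `e` gives equal values.
-/

section Construction

variable {C X : Type} {V L : Type*}

theorem SuffEps.wellFounded {E : V → C → V → Prop} {e : C} (h : SuffEps E e) :
    WellFounded fun b a => ¬ E b e a :=
  WellFounded.wellFounded_iff_has_min.2 fun A hA =>
    let ⟨a, ha, hmin⟩ := h A hA
    ⟨a, ha, fun b hb hba => hba (hmin b hb)⟩

theorem InfPath.map {V' : Type*} {E : V → C → V → Prop} {E' : V' → C → V' → Prop} {φ : V → V'}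
    (hφ : IsMorphism E E' φ) {a : V} {w : ℕ → C} (h : InfPath E a w) : InfPath E' (φ a) w :=
  let ⟨ρ, h0, hstep⟩ := h
  ⟨φ ∘ ρ, congrArg φ h0, fun i => hφ (hstep i)⟩

theorem vval_le_of_isMorphism {V' : Type*} [CompleteLinearOrder X] (val : (ℕ → C) → X)
    {E : V → C → V → Prop} {E' : V' → C → V' → Prop} {φ : V → V'} (hφ : IsMorphism E E' φ)
    (a : V) : vval val E a ≤ vval val E' (φ a) :=
  sSup_le_sSup <| Set.image_mono fun _ => InfPath.map hφ

theorem IsEpsInsertion.interleave_const (e : C) (w : ℕ → C) :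
    IsEpsInsertion e w (Stream'.interleave (Stream'.const e) w).get := by
  refine ⟨fun k => 2 * k + 1, fun i j hij => by simp only; omega,
    fun k => Stream'.get_interleave_right k _ _, fun i hi => ?_⟩
  obtain ⟨k, rfl | rfl⟩ := Nat.even_or_odd' i
  · exact Stream'.get_interleave_left k _ _
  · exact absurd ⟨k, rfl⟩ hi

def monotoneClosure [Preorder V] (E : V → C → V → Prop) : V → C → V → Prop :=
  fun a c b => ∃ v w, v ≤ a ∧ b ≤ w ∧ E v c w

theorem isMorphism_monotoneClosure [Preorder V] (E : V → C → V → Prop) :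
    IsMorphism E (monotoneClosure E) id :=
  fun a _ b h => ⟨a, b, le_rfl, le_rfl, h⟩

theorem monotonic_monotoneClosure [LinearOrder V] (E : V → C → V → Prop) :
    Monotonic (monotoneClosure E) :=
  ⟨fun _ _ _ _ hba ⟨v, w, hv, hw, h⟩ => ⟨v, w, hv.trans hba, hw, h⟩,
    fun _ _ _ _ ⟨v, w, hv, hw, h⟩ hdb => ⟨v, w, hv, hdb.trans hw, h⟩⟩

theorem NoSinks.monotoneClosure [Preorder V] {E : V → C → V → Prop} (hE : NoSinks E) :
    NoSinks (monotoneClosure E) := fun a =>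
  let ⟨c, b, h⟩ := hE a
  ⟨c, b, isMorphism_monotoneClosure E h⟩

theorem InfPath.interleave_of_monotoneClosure [LinearOrder V] {E : V → C → V → Prop} {e : C}
    (hdown : ∀ ⦃v w : V⦄, w ≤ v → E v e w) {a : V} {w : ℕ → C}
    (h : InfPath (monotoneClosure E) a w) :
    InfPath E a (Stream'.interleave (Stream'.const e) w).get := by
  obtain ⟨ρ, rfl, hstep⟩ := h
  choose src tgt hsrc htgt hedge using hstep
  let u : Stream' V := Stream'.cons (ρ 0) tgt
  have hρ_le : ∀ k, ρ k ≤ u.get k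
    | 0 => le_rfl
    | k + 1 => htgt k
  refine ⟨(Stream'.interleave u src).get, rfl, fun i => ?_⟩
  obtain ⟨k, rfl | rfl⟩ := Nat.even_or_odd' i
  · rw [Stream'.get_interleave_left k u src, Stream'.get_interleave_left k _ w,
      Stream'.get_interleave_right k u src]
    exact hdown ((hsrc k).trans (hρ_le k))
  · rw [Stream'.get_interleave_right k u src, Stream'.get_interleave_right k _ w,
      show 2 * k + 1 + 1 = 2 * (k + 1) by ring, Stream'.get_interleave_left (k + 1) u src]
    exact hedge k

theorem vval_monotoneClosure [LinearOrder V] [CompleteLinearOrder X] {val : (ℕ → C) → X}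
    {E : V → C → V → Prop} {e : C} (hne : Neutral val e)
    (hdown : ∀ ⦃v w : V⦄, w ≤ v → E v e w) (a : V) :
    vval val (monotoneClosure E) a = vval val E a := by
  refine le_antisymm (sSup_le ?_) (vval_le_of_isMorphism val (isMorphism_monotoneClosure E) a)
  rintro _ ⟨w, hw, rfl⟩
  rw [← hne w _ (IsEpsInsertion.interleave_const e w)]
  exact le_sSup ⟨_, hw.interleave_of_monotoneClosure hdown, rfl⟩

theorem completionE_coe_coe {M : L → C → L → Prop} {a b : L} {c : C} :
    completionE M a c b ↔ M a c b := by
  simp [completionE]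

theorem isMorphism_coe_completionE (M : L → C → L → Prop) :
    IsMorphism M (completionE M) WithTop.some :=
  fun _ _ _ h => completionE_coe_coe.2 h

theorem InfPath.of_completionE {M : L → C → L → Prop} {a : L} {w : ℕ → C}
    (h : InfPath (completionE M) a w) : InfPath M a w := by
  obtain ⟨ρ, h0, hstep⟩ := h
  have hfin : ∀ i, ∃ b : L, ρ i = b := by
    intro i
    induction i with
    | zero => exact ⟨a, h0⟩
    | succ i ih =>
      obtain ⟨b, hb⟩ := ih
      have := hstep i
      rw [hb] at this
      rcases this with h | ⟨_, b', _, hb', _⟩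
      · exact absurd h WithTop.coe_ne_top
      · exact ⟨b', hb'⟩
  choose ρ' hρ' using hfin
  refine ⟨ρ', WithTop.coe_injective (hρ' 0 ▸ h0), fun i => ?_⟩
  have := hstep i
  rwa [hρ' i, hρ' (i + 1), completionE_coe_coe] at this

theorem vval_completionE_coe [CompleteLinearOrder X] (val : (ℕ → C) → X)
    (M : L → C → L → Prop) (a : L) : vval val (completionE M) a = vval val M a :=
  le_antisymm (sSup_le_sSup <| Set.image_mono fun _ => InfPath.of_completionE)
    (vval_le_of_isMorphism val (isMorphism_coe_completionE M) a)

theorem exists_isLUB_of_wellFoundedLT {α : Type*} [LinearOrder α] [WellFoundedLT α]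
    [OrderTop α] (A : Set α) : ∃ a, IsLUB A a :=
  let h := wellFounded_lt (α := α)
  ⟨h.min (upperBounds A) ⟨⊤, fun _ _ => le_top⟩, h.min_mem _ _,
    fun _ hx => h.min_le hx⟩

theorem cwm_completionE [Nonempty C] [LinearOrder L] [WellFoundedLT L] {M : L → C → L → Prop}
    (hmono : Monotonic M) (hM : NoSinks M) : CWM C (WithTop L) (completionE M) := by
  refine ⟨⟨?_, ?_⟩, ?_, wellFounded_lt, exists_isLUB_of_wellFoundedLT, fun _ _ => ⟨⊤, Or.inl rfl⟩⟩
  · rintro x _ c d hyx (rfl | ⟨a, b, rfl, rfl, h⟩)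
    · exact Or.inl (top_le_iff.1 hyx)
    · induction x with
      | top => exact Or.inl rfl
      | coe x => exact Or.inr ⟨x, b, rfl, rfl, hmono.1 (WithTop.coe_le_coe.1 hyx) h⟩
  · rintro x c _ d (rfl | ⟨a, b, rfl, rfl, h⟩) hdb
    · exact Or.inl rfl
    · induction d with
      | top => exact absurd hdb (by simp)
      | coe d => exact Or.inr ⟨a, d, rfl, rfl, hmono.2 h (WithTop.coe_le_coe.1 hdb)⟩
  · intro x
    induction x with
    | top => exact ⟨Classical.arbitrary C, ⊤, Or.inl rfl⟩
    | coe a =>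
      obtain ⟨c, b, h⟩ := hM a
      exact ⟨c, b, completionE_coe_coe.2 h⟩

end Construction

/-- Lemma 5.3, second step.  If `val` has a neutral color
`e` and `G` has sufficiently many `e`-edges, then there is a completely
well-monotonic graph `G'` with a `val`-preserving morphism `G → G'`. -/
theorem stmt6 {C X : Type} {V : Type u} [CompleteLinearOrder X]
    (val : (ℕ → C) → X) (e : C) (hne : Neutral val e)
    (E : V → C → V → Prop) (hE : NoSinks E) (hse : SuffEps E e) :
    ∃ (L : Type u) (li : LinearOrder L) (M : L → C → L → Prop) (φ : V → L),
      @CWM C L li M ∧ ValPreserving val E M φ := by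
  have : Nonempty C := ⟨e⟩
  have : IsWellFounded V fun b a => ¬ E b e a := ⟨hse.wellFounded⟩
  let _ : LinearOrder V := IsWellFounded.wellOrderExtension fun b a => ¬ E b e a
  -- the extension order compares ranks for `¬ (b →e a)` first
  have hdown : ∀ ⦃v w : V⦄, w ≤ v → E v e w := fun v w hwv =>
    by_contra fun h => not_lt_of_ge hwv (Prod.Lex.left _ _ (IsWellFounded.rank_lt_of_rel h))
  refine ⟨WithTop V, inferInstance, completionE (monotoneClosure E), WithTop.some,
    cwm_completionE (monotonic_monotoneClosure E) hE.monotoneClosure,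
    fun _ _ _ h => isMorphism_coe_completionE _ (isMorphism_monotoneClosure E h), fun a => ?_⟩
  rw [vval_completionE_coe, vval_monotoneClosure hne hdown]
end

section
/- Let val be a positional C-valuation with a strongly neutral color ε, let G = (V,E) be a C-graph, and let 𝒢' be the C-game defined from G as in the context. Let P' be an optimal positional strategy in 𝒢', and define the C-graph G'' = (V, E'') with E'' = E ∪ { v →ε v' : there exists A ∈ 𝒫⁺(V) with v, v' ∈ A and A →ε v' in P' }. Then the identity map on V is a val-preserving morphism from G to G'', and G'' has sufficiently many ε-edges. -/
/-!
Common vocabulary: graphs as edge relations `E : V → C → V → Prop` (a `C`-graph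
additionally has no sinks), infinite paths and their colorations, valuations,
values of vertices, morphisms, universality, monotonic graphs, games,
strategies, positional strategies and positionality, neutral colors.
-/

universe u v w

/-- The game `𝒢'` built from a graph `G = (V, E)` and a (strongly neutral)
color `e`: vertices are `V ⊕ 𝒫⁺(V)`, Eve controls the nonempty subsets,
edges are those of `E` together with `v →e A` and `A →e v` for `v ∈ A`. -/
def gameE {C : Type} {V : Type u} (E : V → C → V → Prop) (e : C) :
    V ⊕ {A : Set V // A.Nonempty} → C → V ⊕ {A : Set V // A.Nonempty} → Prop :=
  fun x c y =>
    match x, y with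
    | Sum.inl a, Sum.inl b => E a c b
    | Sum.inl a, Sum.inr A => c = e ∧ a ∈ A.val
    | Sum.inr A, Sum.inl b => c = e ∧ b ∈ A.val
    | Sum.inr _, Sum.inr _ => False
/-- The graph `G''` obtained from `G` by adding the `e`-edges `v →e v'`
whenever some nonempty `A` contains both `v, v'` and `A →e v'` is an edge of
the optimal positional strategy `P'`. -/
def augE {C : Type} {V : Type u} (E : V → C → V → Prop) (e : C)
    (P' : PosStrategy (gameE E e) (Set.range Sum.inr)) : V → C → V → Prop :=
  fun a c b => E a c b ∨
    (c = e ∧ ∃ A : {A : Set V // A.Nonempty}, a ∈ A.val ∧ b ∈ A.val ∧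
      P'.F (Sum.inr A) e (Sum.inl b))


/-!
Every edge of `G''` is an edge of `G` or shortcuts a detour `v →ε A →ε v'` allowed by `P'`, so a
path of `G''` lifts to a play consistent with `P'` whose coloration only has extra `ε`'s inserted;
by neutrality and optimality of `P'` its value is at most the value of `v` in `𝒢'`. That value is
at most `val_G(v)`: Eve may answer every move `v →ε A` by `A →ε v`, so that her plays project to
paths of `G` interleaved with `ε`-loops. When such a play makes infinitely many moves of `G`,
neutrality deletes the loops; otherwise its coloration is `u ε^ω`, whose value, `ε` being
eventually good for Eve, is at most that of `u` followed by the coloration of any path of `G`.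
Finally, from every set `A` the strategy `P'` picks some `v' ∈ A`, and all of `A` points to `v'`
in `G''`.
-/

section Paths

variable {C X : Type} {V : Type v} {W : Type w} [CompleteLinearOrder X] {val : (ℕ → C) → X}

theorem le_vval {E : V → C → V → Prop} {a : V} {w : ℕ → C} (h : InfPath E a w) :
    val w ≤ vval val E a :=
  le_sSup ⟨w, h, rfl⟩

theorem IsMorphism.vval_le {E : V → C → V → Prop} {E' : W → C → W → Prop} {φ : V → W}
    (hφ : IsMorphism E E' φ) (a : V) : vval val E a ≤ vval val E' (φ a) := by
  refine sSup_le ?_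
  rintro _ ⟨w, ⟨ρ, rfl, hρ⟩, rfl⟩
  exact le_vval ⟨φ ∘ ρ, rfl, fun i => hφ (hρ i)⟩

theorem NoSinks.exists_infPath {E : V → C → V → Prop} (hE : NoSinks E) (a : V) :
    ∃ w, InfPath E a w := by
  choose c b hb using hE
  refine ⟨fun n => c (b^[n] a), fun n => b^[n] a, rfl, fun n => ?_⟩
  simpa only [Function.iterate_succ_apply'] using hb _

theorem wcat_ofFn (N : ℕ) (w z : ℕ → C) (i : ℕ) :
    wcat (List.ofFn fun k : Fin N => w k) z i = if i < N then w i else z (i - N) := by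
  simp [wcat]

theorem exists_path_wcat_ofFn {G G' : V → C → V → Prop} {M : ℕ} {y ρ : ℕ → V} {w z : ℕ → C}
    (hy : ∀ i < M, G (y i) (w i) (y (i + 1))) (hρ0 : ρ 0 = y M)
    (hρ : ∀ i, G' (ρ i) (z i) (ρ (i + 1))) :
    ∃ y' : ℕ → V, y' 0 = y 0 ∧
      (∀ i < M, G (y' i) (wcat (List.ofFn fun k : Fin M => w k) z i) (y' (i + 1))) ∧
      ∀ i, M ≤ i → G' (y' i) (wcat (List.ofFn fun k : Fin M => w k) z i) (y' (i + 1)) := by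
  let y' : ℕ → V := fun i => if i ≤ M then y i else ρ (i - M)
  have hy'ρ : ∀ i, M ≤ i → y' i = ρ (i - M) := by
    intro i hi
    rcases hi.eq_or_lt with rfl | hi
    · simp [y', hρ0]
    · simp [y', hi.not_ge]
  refine ⟨y', by simp [y'], fun i hi => ?_, fun i hi => ?_⟩
  · simpa [y', wcat_ofFn, hi, hi.le, Nat.succ_le_of_lt hi] using hy i hi
  · rw [hy'ρ i hi, hy'ρ (i + 1) (by omega), wcat_ofFn, if_neg (by omega),
      show i + 1 - M = i - M + 1 by omega]
    exact hρ _

theorem isEpsInsertion_of_count {e : C} {w w' : ℕ → C} {p : ℕ → Prop} [DecidablePred p]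
    (hp : {n | p n}.Infinite) (hw : ∀ n, p n → w' n = w (Nat.count p n))
    (he : ∀ n, ¬ p n → w' n = e) : IsEpsInsertion e w w' := by
  refine ⟨Nat.nth p, Nat.nth_strictMono hp, fun k => ?_, fun i hi => he i fun h => hi ?_⟩
  · rw [hw _ (Nat.nth_mem_of_infinite hp k), Nat.count_nth_of_infinite hp]
  · rw [Nat.range_nth_of_infinite hp]
    exact h

end Paths

section Subdivision

variable (d : ℕ → Prop) [DecidablePred d]

/-- A walk along the edges `0, 1, 2, …` of a path that pauses halfway along every edge `k` with
`¬ d k`: the state `(k, true)` is that halfway point. -/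
def subdivNext (s : ℕ × Bool) : ℕ × Bool :=
  if s.2 = true ∨ d s.1 then (s.1 + 1, false) else (s.1, true)

def subdivState (n : ℕ) : ℕ × Bool := (subdivNext d)^[n] (0, false)

abbrev SubdivAdvances (n : ℕ) : Prop := (subdivState d n).2 = true ∨ d (subdivState d n).1

theorem subdivState_succ (n : ℕ) : subdivState d (n + 1) = subdivNext d (subdivState d n) :=
  Function.iterate_succ_apply' ..

theorem subdivState_fst (n : ℕ) : (subdivState d n).1 = Nat.count (SubdivAdvances d) n := by
  induction n with
  | zero => rfl
  | succ n ih =>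
    rw [subdivState_succ, Nat.count_succ, ← ih]
    by_cases h : SubdivAdvances d n <;> simp only [subdivNext, h, if_true, if_false, add_zero]

theorem subdivAdvances_succ_of_not {n : ℕ} (h : ¬ SubdivAdvances d n) :
    SubdivAdvances d (n + 1) := by
  simp only [SubdivAdvances, subdivState_succ, subdivNext, if_neg h, true_or]

theorem infinite_setOf_subdivAdvances : {n | SubdivAdvances d n}.Infinite := by
  refine Set.infinite_of_forall_exists_gt fun n => ?_
  by_cases h : SubdivAdvances d (n + 1)
  · exact ⟨n + 1, h, n.lt_succ_self⟩
  · exact ⟨n + 2, subdivAdvances_succ_of_not d h, by omega⟩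

theorem not_of_subdivState_snd {n : ℕ} (h : (subdivState d n).2 = true) :
    ¬ d (subdivState d n).1 := by
  cases n with
  | zero => simp [subdivState] at h
  | succ n =>
    by_cases hn : SubdivAdvances d n
    · simp [subdivState_succ, subdivNext, if_pos hn] at h
    · rw [subdivState_succ, subdivNext, if_neg hn]
      exact fun hd => hn (Or.inr hd)

end Subdivision

section Lift

variable {C X : Type} {V : Type v} {W : Type w} [CompleteLinearOrder X] {val : (ℕ → C) → X}

theorem InfPath.exists_isEpsInsertion_of_subdivision {e : C} {G₁ : V → C → V → Prop}
    {G₂ : W → C → W → Prop} {φ : V → W}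
    (hφ : ∀ ⦃a c b⦄, G₁ a c b → G₂ (φ a) c (φ b) ∨ ∃ m, G₂ (φ a) e m ∧ G₂ m c (φ b))
    {a : V} {w : ℕ → C} (h : InfPath G₁ a w) :
    ∃ w', IsEpsInsertion e w w' ∧ InfPath G₂ (φ a) w' := by
  classical
  obtain ⟨ρ, rfl, hρ⟩ := h
  let direct : ℕ → Prop := fun k => G₂ (φ (ρ k)) (w k) (φ (ρ (k + 1)))
  have hmid : ∀ k, ∃ m, direct k ∨ G₂ (φ (ρ k)) e m ∧ G₂ m (w k) (φ (ρ (k + 1))) := fun k =>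
    (hφ (hρ k)).elim (fun h => ⟨φ (ρ k), Or.inl h⟩) fun ⟨m, hm⟩ => ⟨m, Or.inr hm⟩
  choose m hm using hmid
  let pos : ℕ × Bool → W := fun s => if s.2 then m s.1 else φ (ρ s.1)
  have hedge : ∀ n, G₂ (pos (subdivState direct n))
      (if SubdivAdvances direct n then w (subdivState direct n).1 else e)
      (pos (subdivState direct (n + 1))) := by
    intro n
    have hhalf := not_of_subdivState_snd direct (n := n)
    rw [subdivState_succ]
    unfold SubdivAdvances
    generalize subdivState direct n = s at hhalf ⊢
    rcases s with ⟨k, _ | _⟩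
    · by_cases hd : direct k
      · simp only [subdivNext, pos, hd, or_true, if_true, Bool.false_eq_true, if_false]
        exact hd
      · simpa [subdivNext, pos, hd] using ((hm k).resolve_left hd).1
    · simpa [subdivNext, pos] using ((hm k).resolve_left (hhalf rfl)).2
  refine ⟨_, isEpsInsertion_of_count (infinite_setOf_subdivAdvances direct)
      (fun n h => by simp only [h, if_true, subdivState_fst])
      (fun n h => by simp only [h, if_false]), _, rfl, hedge⟩

theorem Neutral.vval_le_of_subdivision {e : C} (hn : Neutral val e) {G₁ : V → C → V → Prop}
    {G₂ : W → C → W → Prop} (φ : V → W)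
    (hφ : ∀ ⦃a c b⦄, G₁ a c b → G₂ (φ a) c (φ b) ∨ ∃ m, G₂ (φ a) e m ∧ G₂ m c (φ b))
    (a : V) : vval val G₁ a ≤ vval val G₂ (φ a) := by
  refine sSup_le ?_
  rintro _ ⟨w, hw, rfl⟩
  obtain ⟨w', hins, hw'⟩ := hw.exists_isEpsInsertion_of_subdivision hφ
  rw [← hn w w' hins]
  exact le_vval hw'

end Lift

def withLoops {C : Type} {V : Type v} (E : V → C → V → Prop) (e : C) : V → C → V → Prop :=
  fun a c b => E a c b ∨ (c = e ∧ b = a)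

section Loops

variable {C X : Type} {V : Type v} [CompleteLinearOrder X] {val : (ℕ → C) → X}
  {E : V → C → V → Prop} {e : C}

theorem Neutral.val_le_vval_of_withLoops_of_infinite (hn : Neutral val e) {y : ℕ → V}
    {w : ℕ → C} (hy : ∀ i, withLoops E e (y i) (w i) (y (i + 1)))
    (hinf : {i | E (y i) (w i) (y (i + 1))}.Infinite) : val w ≤ vval val E (y 0) := by
  classical
  set p : ℕ → Prop := fun i => E (y i) (w i) (y (i + 1))
  have hloop : ∀ i, ¬ p i → w i = e ∧ y (i + 1) = y i := fun i h => (hy i).resolve_left h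
  -- `z k` is the vertex reached by the first `k` moves of `E`.
  let z : ℕ → V := fun k => match k with
    | 0 => y 0
    | k + 1 => y (Nat.nth p k + 1)
  have hyz : ∀ n, y n = z (Nat.count p n) := by
    intro n
    induction n with
    | zero => rfl
    | succ n ih =>
      by_cases h : p n
      · rw [Nat.count_succ, if_pos h]
        exact congrArg (fun i => y (i + 1)) (Nat.nth_count h).symm
      · rw [Nat.count_succ, if_neg h, add_zero, ← ih]
        exact (hloop n h).2
  have hpath : InfPath E (y 0) fun k => w (Nat.nth p k) := by
    refine ⟨z, rfl, fun k => ?_⟩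
    have hzk : z k = y (Nat.nth p k) := by rw [hyz, Nat.count_nth_of_infinite hinf]
    rw [hzk]
    exact Nat.nth_mem_of_infinite hinf k
  have hins : IsEpsInsertion e (fun k => w (Nat.nth p k)) w :=
    isEpsInsertion_of_count hinf (fun n h => by rw [Nat.nth_count h]) fun n h => (hloop n h).1
  rw [hn _ _ hins]
  exact le_vval hpath

theorem StronglyNeutral.vval_withLoops_le (hsn : StronglyNeutral val e) (hE : NoSinks E)
    (v : V) : vval val (withLoops E e) v ≤ vval val E v := by
  refine sSup_le ?_
  rintro _ ⟨w, ⟨y, rfl, hy⟩, rfl⟩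
  by_cases hinf : {i | E (y i) (w i) (y (i + 1))}.Infinite
  · exact hsn.1.val_le_vval_of_withLoops_of_infinite hy hinf
  obtain ⟨N, hN⟩ := (Set.not_infinite.mp hinf).bddAbove
  obtain ⟨M, hM⟩ : ∃ M, ∀ i, M ≤ i → ¬ E (y i) (w i) (y (i + 1)) :=
    ⟨N + 1, fun i hi h => by have := hN h; omega⟩
  set u := List.ofFn fun k : Fin M => w k
  have htail : w = wcat u fun _ => e := funext fun i => by
    rw [wcat_ofFn]
    split_ifs with hi
    · rfl
    · exact ((hy i).resolve_left (hM i (by omega))).1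
  -- The path only loops after time `M`; as `e` is eventually good, any path of `E` from `y M`
  -- gives a tail that is at least as bad for Eve.
  obtain ⟨z, ρ, hρ0, hρ⟩ := hE.exists_infPath (y M)
  obtain ⟨y', hy'0, hpre, hreal⟩ := exists_path_wcat_ofFn (fun i _ => hy i) hρ0 hρ
  have hy' : ∀ i, withLoops E e (y' i) (wcat u z i) (y' (i + 1)) := fun i =>
    (lt_or_ge i M).elim (hpre i) fun hi => Or.inl (hreal i hi)
  have hinf' : {i | E (y' i) (wcat u z i) (y' (i + 1))}.Infinite :=
    Set.infinite_of_forall_exists_gt fun n => ⟨n + M + 1, hreal _ (by omega), by omega⟩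
  calc val w = ⨅ z', val (wcat u z') := htail ▸ hsn.2 u
    _ ≤ val (wcat u z) := iInf_le _ z
    _ ≤ vval val E (y' 0) := hsn.1.val_le_vval_of_withLoops_of_infinite hy' hinf'
    _ = vval val E (y 0) := by rw [hy'0]

end Loops

/-- The vertex of `G` at which a history of `𝒢'` stands, or, if it stands at a set, the vertex
from which that set was entered. -/
def home {C : Type} {V : Type v} {T : Type w} (v₀ : V) : List (C × (V ⊕ T)) → V
  | [] => v₀
  | (_, Sum.inl x) :: _ => x
  | (_, Sum.inr _) :: π => home v₀ π

theorem home_of_lastV {C : Type} {V : Type v} {T : Type w} {v₀ x : V} :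
    ∀ {π : List (C × (V ⊕ T))}, lastV (Sum.inl v₀) π = Sum.inl x → home v₀ π = x
  | [], h => Sum.inl.inj h
  | (_, Sum.inl _) :: _, h => Sum.inl.inj h

/-- Histories consistent with Eve's strategy in `𝒢'` that answers `v →e A` by `A →e v`. -/
inductive ReturnHist {C : Type} {V : Type v} (E : V → C → V → Prop) (e : C) (v₀ : V) :
    List (C × (V ⊕ {A : Set V // A.Nonempty})) → Prop
  | nil : ReturnHist E e v₀ []
  | move {π x c y} : ReturnHist E e v₀ π → lastV (Sum.inl v₀) π = Sum.inl x → E x c y →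
      ReturnHist E e v₀ ((c, Sum.inl y) :: π)
  | enter {π x A} : ReturnHist E e v₀ π → lastV (Sum.inl v₀) π = Sum.inl x → x ∈ A.1 →
      ReturnHist E e v₀ ((e, Sum.inr A) :: π)
  | exit {π A} : ReturnHist E e v₀ ((e, Sum.inr A) :: π) →
      ReturnHist E e v₀ ((e, Sum.inl (home v₀ π)) :: (e, Sum.inr A) :: π)

namespace ReturnHist

variable {C : Type} {V : Type v} {E : V → C → V → Prop} {e : C} {v₀ : V}
  {π : List (C × (V ⊕ {A : Set V // A.Nonempty}))} {c : C} {t : V ⊕ {A : Set V // A.Nonempty}}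

theorem tail (h : ReturnHist E e v₀ ((c, t) :: π)) : ReturnHist E e v₀ π := by
  cases h <;> assumption

theorem home_mem {A : {A : Set V // A.Nonempty}} (h : ReturnHist E e v₀ ((c, Sum.inr A) :: π)) :
    home v₀ π ∈ A.1 := by
  cases h with
  | enter _ hx hxA => rwa [home_of_lastV hx]

theorem validPath (h : ReturnHist E e v₀ π) : ValidPath (gameE E e) (Sum.inl v₀) π := by
  induction h with
  | nil => trivial
  | move _ hx hxy ih => exact ⟨ih, by rw [hx]; exact hxy⟩
  | enter _ hx hxA ih => exact ⟨ih, by rw [hx]; exact ⟨rfl, hxA⟩⟩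
  | exit h ih => exact ⟨ih, rfl, h.home_mem⟩

theorem withLoops_home (h : ReturnHist E e v₀ ((c, t) :: π)) :
    withLoops E e (home v₀ π) c (home v₀ ((c, t) :: π)) := by
  cases h with
  | move _ hx hxy => rw [home_of_lastV hx]; exact Or.inl hxy
  | enter => exact Or.inr ⟨rfl, rfl⟩
  | exit => exact Or.inr ⟨rfl, rfl⟩

theorem cons_of_gameE {x : V} (h : ReturnHist E e v₀ π) (hx : lastV (Sum.inl v₀) π = Sum.inl x)
    (hxt : gameE E e (Sum.inl x) c t) : ReturnHist E e v₀ ((c, t) :: π) := by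
  rcases t with y | A
  · exact h.move hx hxt
  · obtain ⟨rfl, hxA⟩ := hxt
    exact h.enter hx hxA

theorem exists_cons (hE : NoSinks E) (h : ReturnHist E e v₀ π) :
    ∃ c t, ReturnHist E e v₀ ((c, t) :: π) := by
  match π, h with
  | [], h =>
    obtain ⟨c, y, hy⟩ := hE v₀
    exact ⟨c, _, h.move rfl hy⟩
  | (_, Sum.inl x) :: _, h =>
    obtain ⟨c, y, hy⟩ := hE x
    exact ⟨c, _, h.move rfl hy⟩
  | (_, Sum.inr _) :: _, h =>
    cases h with
    | enter => exact ⟨_, _, ReturnHist.exit (.enter ‹_› ‹_› ‹_›)⟩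

end ReturnHist

section ReturnStrategy

variable {C X : Type} {V : Type v} [CompleteLinearOrder X] {val : (ℕ → C) → X}
  {E : V → C → V → Prop} {e : C}

def returnStrategy (hE : NoSinks E) (e : C) (v₀ : V) :
    Strategy (gameE E e) (Set.range Sum.inr) (Sum.inl v₀) where
  H := {π | ReturnHist E e v₀ π}
  F π c π' := ReturnHist E e v₀ π' ∧ ∃ t, π' = (c, t) :: π
  valid _ h := h.validPath
  nil_mem := .nil
  F_sub := by
    rintro π c _ ⟨h, t, rfl⟩
    exact ⟨h.tail, h, t, rfl⟩
  no_sink π h := by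
    obtain ⟨c, t, h'⟩ := h.exists_cons hE
    exact ⟨c, _, h', t, rfl⟩
  adam_closed π h hπ c t hct := by
    cases hx : lastV (Sum.inl v₀) π with
    | inr A => exact absurd ⟨A, hx.symm⟩ hπ
    | inl x =>
      rw [hx] at hct
      have h' := h.cons_of_gameE hx hct
      exact ⟨h', h', t, rfl⟩

theorem returnStrategy_value_le (hE : NoSinks E) (v₀ : V) :
    (returnStrategy hE e v₀).value val ≤ vval val (withLoops E e) v₀ := by
  refine sSup_le ?_
  rintro _ ⟨w, ⟨ρ, hρ0, hρ⟩, rfl⟩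
  refine le_vval ⟨fun i => home v₀ (ρ i), by simp [hρ0, home], fun i => ?_⟩
  obtain ⟨h, t, ht⟩ := hρ i
  rw [ht] at h
  simpa only [ht] using h.withLoops_home

theorem StronglyNeutral.gameValue_gameE_inl_le (hsn : StronglyNeutral val e) (hE : NoSinks E)
    (v : V) : gameValue val (gameE E e) (Set.range Sum.inr) (Sum.inl v) ≤ vval val E v :=
  calc _ ≤ (returnStrategy hE e v).value val := iInf_le _ _
    _ ≤ vval val (withLoops E e) v := returnStrategy_value_le hE v
    _ ≤ vval val E v := hsn.vval_withLoops_le hE v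

end ReturnStrategy

section Augmented

variable {C : Type} {V : Type u} {E : V → C → V → Prop} {e : C}

theorem augE_subdivision (P' : PosStrategy (gameE E e) (Set.range Sum.inr)) ⦃a : V⦄ ⦃c : C⦄
    ⦃b : V⦄ (h : augE E e P' a c b) :
    P'.F (Sum.inl a) c (Sum.inl b) ∨ ∃ m, P'.F (Sum.inl a) e m ∧ P'.F m c (Sum.inl b) := by
  rcases h with h | ⟨rfl, A, ha, -, hb⟩
  · exact Or.inl (P'.adam_all _ (by simp) _ _ h)
  · exact Or.inr ⟨Sum.inr A, P'.adam_all _ (by simp) _ _ ⟨rfl, ha⟩, hb⟩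

theorem suffEps_augE (P' : PosStrategy (gameE E e) (Set.range Sum.inr)) :
    SuffEps (augE E e P') e := by
  intro A hA
  obtain ⟨c, t, hF⟩ := P'.no_sink (Sum.inr ⟨A, hA⟩)
  rcases t with b | B
  · obtain ⟨rfl, hb⟩ := P'.sub hF
    exact ⟨b, hb, fun a ha => Or.inr ⟨rfl, ⟨A, hA⟩, ha, hb, hF⟩⟩
  · exact (P'.sub hF).elim

end Augmented

theorem stmt8_general {C X : Type} {V : Type u} [CompleteLinearOrder X]
    (val : (ℕ → C) → X) (e : C)
    (hsn : StronglyNeutral val e)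
    (E : V → C → V → Prop) (hE : NoSinks E)
    (P' : PosStrategy (gameE E e) (Set.range Sum.inr)) (hopt : P'.Optimal val) :
    ValPreserving val E (augE E e P') (id : V → V) ∧ SuffEps (augE E e P') e := by
  have hsub : IsMorphism E (augE E e P') id := fun _ _ _ h => Or.inl h
  refine ⟨⟨hsub, fun a => le_antisymm ?_ (hsub.vval_le a)⟩, suffEps_augE P'⟩
  calc vval val (augE E e P') a ≤ vval val P'.F (Sum.inl a) :=
        hsn.1.vval_le_of_subdivision Sum.inl (augE_subdivision P') a
    _ = gameValue val (gameE E e) (Set.range Sum.inr) (Sum.inl a) := hopt _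
    _ ≤ vval val E a := hsn.gameValue_gameE_inl_le hE a

/-- Lemma 5.5, first step.  Given an optimal positional
strategy `P'` in `𝒢'`, the identity is a `val`-preserving morphism from `G`
to `G''`, and `G''` has sufficiently many `e`-edges. -/
theorem stmt8 {C X : Type} {V : Type u} [CompleteLinearOrder X]
    (val : (ℕ → C) → X) (e : C) (hpos : Positional.{u} val)
    (hsn : StronglyNeutral val e)
    (E : V → C → V → Prop) (hE : NoSinks E)
    (P' : PosStrategy (gameE E e) (Set.range Sum.inr)) (hopt : P'.Optimal val) :
    ValPreserving val E (augE E e P') (id : V → V) ∧ SuffEps (augE E e P') e :=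
  stmt8_general val e hsn E hE P' hopt
end
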